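/- Let Y ≥ X a.s. with E[(Y−X)²] ≤ Δ where Δ = 4/((2p−1)L^{2p−1}) + 8μ(c+c')/n, μ ≥ 0, and suppose F_X is Lipschitz with constant f_max. Then sup_x (F_X(x) − F_Y(x)) ≤ (2^{1/3} + 2^{−2/3}) f_max^{2/3} Δ^{1/3}. -/

import Mathlib

/-!
Chebyshev's inequality applied to `Y - X` gives, for every `ε > 0`,
`F_X(x - ε) - F_Y(x) ≤ E[(Y - X)²] / ε²`, while the Lipschitz bound gives
`F_X(x) - F_X(x - ε) ≤ ε f_max`. Adding them, `F_X(x) - F_Y(x) ≤ ε f_max + Δ / ε²` for all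
`ε > 0`, and the right-hand side is minimised at `ε = (2 Δ / f_max)^(1/3)`.
-/

open MeasureTheory Real

lemma exists_pos_mul_add_div_sq_eq {a b : ℝ} (ha : 0 < a) (hb : 0 < b) :
    ∃ ε > 0, ε * a + b / ε ^ 2 =
      ((2 : ℝ) ^ ((1 : ℝ) / 3) + (2 : ℝ) ^ (-(2 : ℝ) / 3)) * a ^ ((2 : ℝ) / 3) *
        b ^ ((1 : ℝ) / 3) := by
  have cube : ∀ {y : ℝ}, 0 ≤ y → (y ^ ((1 : ℝ) / 3)) ^ 3 = y := fun hy ↦ by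
    rw [← rpow_natCast, ← rpow_mul hy]; norm_num
  have ht2 : (2 : ℝ) ^ (-(2 : ℝ) / 3) = (((2 : ℝ) ^ ((1 : ℝ) / 3)) ^ 2)⁻¹ := by
    rw [← rpow_natCast, ← rpow_mul (by norm_num), ← rpow_neg (by norm_num)]; norm_num
  have hu2 : a ^ ((2 : ℝ) / 3) = (a ^ ((1 : ℝ) / 3)) ^ 2 := by
    rw [← rpow_natCast, ← rpow_mul ha.le]; norm_num
  have ha3 := cube ha.le
  have hb3 := cube hb.le
  rw [ht2, hu2]
  set t := (2 : ℝ) ^ ((1 : ℝ) / 3)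
  set u := a ^ ((1 : ℝ) / 3)
  set v := b ^ ((1 : ℝ) / 3)
  have hu : 0 < u := by positivity
  have hv : 0 < v := by positivity
  -- `ε = (2 b / a) ^ (1/3)`, the critical point of `ε ↦ ε a + b / ε²`
  refine ⟨t * v / u, by positivity, ?_⟩
  rw [← ha3, ← hb3]
  field_simp

lemma le_of_forall_pos_le_mul_add_div_sq {g a b : ℝ} (ha : 0 ≤ a) (hb : 0 ≤ b)
    (h : ∀ ε > 0, g ≤ ε * a + b / ε ^ 2) :
    g ≤ ((2 : ℝ) ^ ((1 : ℝ) / 3) + (2 : ℝ) ^ (-(2 : ℝ) / 3)) * a ^ ((2 : ℝ) / 3) *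
        b ^ ((1 : ℝ) / 3) := by
  set C := (2 : ℝ) ^ ((1 : ℝ) / 3) + (2 : ℝ) ^ (-(2 : ℝ) / 3)
  have perturbed : ∀ η > 0, g ≤ C * (a + η) ^ ((2 : ℝ) / 3) * (b + η) ^ ((1 : ℝ) / 3) := by
    intro η hη
    obtain ⟨ε, hε, heq⟩ := exists_pos_mul_add_div_sq_eq (a := a + η) (b := b + η)
      (by positivity) (by positivity)
    calc g ≤ ε * a + b / ε ^ 2 := h ε hε
      _ ≤ ε * (a + η) + (b + η) / ε ^ 2 := by gcongr <;> linarith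
      _ = _ := heq
  have hcont : Continuous fun η : ℝ ↦
      C * (a + η) ^ ((2 : ℝ) / 3) * (b + η) ^ ((1 : ℝ) / 3) := by
    fun_prop (disch := norm_num)
  have hlim := (hcont.tendsto 0).mono_left (nhdsWithin_le_nhds (s := Set.Ioi 0))
  simp only [add_zero] at hlim
  exact ge_of_tendsto hlim (eventually_nhdsWithin_of_forall perturbed)

section

variable {Ω : Type*} [MeasurableSpace Ω] {μ : Measure Ω}

lemma measureReal_lt_le_integral_sq_div_sq [IsFiniteMeasure μ] {f : Ω → ℝ}
    (hf : Integrable (fun ω ↦ f ω ^ 2) μ) {ε : ℝ} (hε : 0 < ε) :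
    μ.real {ω | ε < f ω} ≤ (∫ ω, f ω ^ 2 ∂μ) / ε ^ 2 := by
  have hsub : {ω | ε < f ω} ⊆ {ω | ε ^ 2 ≤ f ω ^ 2} := fun ω (hω : ε < f ω) ↦
    pow_le_pow_left₀ hε.le hω.le 2
  rw [le_div_iff₀' (by positivity)]
  calc ε ^ 2 * μ.real {ω | ε < f ω} ≤ ε ^ 2 * μ.real {ω | ε ^ 2 ≤ f ω ^ 2} :=
        mul_le_mul_of_nonneg_left (measureReal_mono hsub) (sq_nonneg ε)
    _ ≤ ∫ ω, f ω ^ 2 ∂μ :=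
        mul_meas_ge_le_integral_of_nonneg (ae_of_all _ fun _ ↦ sq_nonneg _) hf _

lemma measureReal_le_sub_sub_le_integral_sq_div_sq [IsFiniteMeasure μ] {X Y : Ω → ℝ}
    (hint : Integrable (fun ω ↦ (Y ω - X ω) ^ 2) μ) (x : ℝ) {ε : ℝ} (hε : 0 < ε) :
    μ.real {ω | X ω ≤ x - ε} - μ.real {ω | Y ω ≤ x} ≤ (∫ ω, (Y ω - X ω) ^ 2 ∂μ) / ε ^ 2 := by
  have hsub : {ω | X ω ≤ x - ε} ⊆ {ω | Y ω ≤ x} ∪ {ω | ε < Y ω - X ω} := by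
    intro ω (hω : X ω ≤ x - ε)
    rcases le_or_gt (Y ω) x with hY | hY
    · exact Or.inl hY
    · exact Or.inr (show ε < Y ω - X ω by linarith)
  linarith [measureReal_mono (μ := μ) hsub, measureReal_union_le (μ := μ) {ω | Y ω ≤ x}
    {ω | ε < Y ω - X ω}, measureReal_lt_le_integral_sq_div_sq hint hε]

end

theorem cdf_subsampled_tradeoff_general {Ω : Type*} [MeasurableSpace Ω] (P : Measure Ω)
    [IsProbabilityMeasure P]
    (X Y : Ω → ℝ)
    (hint : Integrable (fun ω => (Y ω - X ω) ^ 2) P)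
    (f_max : ℝ) (Δ : ℝ)
    (hE : (∫ ω, (Y ω - X ω) ^ 2 ∂P) ≤ Δ)
    (hLip : ∀ x : ℝ, ∀ ε > (0 : ℝ),
      (P {ω | X ω ≤ x}).toReal - (P {ω | X ω ≤ x - ε}).toReal ≤ ε * f_max) :
    ∀ x : ℝ,
      (P {ω | X ω ≤ x}).toReal - (P {ω | Y ω ≤ x}).toReal ≤
        ((2 : ℝ) ^ ((1 : ℝ) / 3) + (2 : ℝ) ^ (-(2 : ℝ) / 3)) * f_max ^ ((2 : ℝ) / 3) *
          Δ ^ ((1 : ℝ) / 3) := by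
  intro x
  simp only [← measureReal_def] at hLip ⊢
  have hf : 0 ≤ f_max := by
    have hmono : P.real {ω | X ω ≤ x - 1} ≤ P.real {ω | X ω ≤ x} :=
      measureReal_mono fun ω (hω : X ω ≤ x - 1) ↦ show X ω ≤ x by linarith
    linarith [hLip x 1 one_pos]
  have hΔ : 0 ≤ Δ := (integral_nonneg fun _ ↦ sq_nonneg _).trans hE
  refine le_of_forall_pos_le_mul_add_div_sq hf hΔ fun ε hε ↦ ?_
  have hshift := measureReal_le_sub_sub_le_integral_sq_div_sq hint x hε
  have hmoment : (∫ ω, (Y ω - X ω) ^ 2 ∂P) / ε ^ 2 ≤ Δ / ε ^ 2 := by gcongr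
  linarith [hLip x ε hε]

/-- Subsampled envelope CDF bound: if `Y ≥ X` a.s., `E[(Y-X)²] ≤ Δ` with
`Δ = 4/((2p-1)L^(2p-1)) + 8μ(c+c')/n`, and `F_X` is `f_max`-Lipschitz, then
`sup_x (F_X(x) - F_Y(x)) ≤ (2^(1/3) + 2^(-2/3)) f_max^(2/3) Δ^(1/3)`. -/
theorem cdf_subsampled_tradeoff {Ω : Type*} [MeasurableSpace Ω] (P : Measure Ω)
    [IsProbabilityMeasure P]
    (X Y : Ω → ℝ) (hX : Measurable X) (hY : Measurable Y)
    (hdom : ∀ᵐ ω ∂P, X ω ≤ Y ω)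
    (hint : Integrable (fun ω => (Y ω - X ω) ^ 2) P)
    (p : ℝ) (hp : 1 / 2 < p) (L : ℝ) (hL : 1 ≤ L) (n : ℕ) (hn : 1 ≤ n)
    (c c' μ : ℝ) (hc : 0 ≤ c) (hc' : 0 ≤ c') (hμ : 0 ≤ μ)
    (f_max : ℝ) (hf : 0 < f_max) (Δ : ℝ)
    (hΔ : Δ = 4 / ((2 * p - 1) * L ^ (2 * p - 1)) + 8 * μ * (c + c') / n)
    (hE : (∫ ω, (Y ω - X ω) ^ 2 ∂P) ≤ Δ)
    (hLip : ∀ x : ℝ, ∀ ε > (0 : ℝ),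
      (P {ω | X ω ≤ x}).toReal - (P {ω | X ω ≤ x - ε}).toReal ≤ ε * f_max) :
    ∀ x : ℝ,
      (P {ω | X ω ≤ x}).toReal - (P {ω | Y ω ≤ x}).toReal ≤
        ((2 : ℝ) ^ ((1 : ℝ) / 3) + (2 : ℝ) ^ (-(2 : ℝ) / 3)) * f_max ^ ((2 : ℝ) / 3) *
          Δ ^ ((1 : ℝ) / 3) :=
  cdf_subsampled_tradeoff_general P X Y hint f_max Δ hE hLip
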